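/- Let n be a natural number and let A : ℂⁿ → ℂⁿ be a linear map. The following are equivalent: (a) ker(A²) = ker(A); (b) for every linear map B : ℂⁿ → ℂⁿ satisfying range(A ∘ B) ⊆ range(B), one has range(A ∘ B) = range(A) ∩ range(B); (c) range(A²) = range(A); (d) rank(A²) = rank(A). -/

import Mathlib

/-!
If `ker (A ∘ A) = ker A` then `ker A ∩ range A = 0`, so `A` is injective on
`range A ∩ range B`; the hypothesis `range (A ∘ B) ≤ range B` makes that subspace `A`-stable,
hence `A` is onto it, and every element of it is `A (B z)`. Taking `B = A` recovers
`range (A ∘ A) = range A`, and rank–nullity links the kernel, range and rank conditions.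
-/

open Module LinearMap

section Ring

variable {R M : Type*} [Ring R] [AddCommGroup M] [Module R M]

lemma LinearMap.disjoint_ker_range_of_ker_comp_self_eq {f : M →ₗ[R] M}
    (h : ker (f ∘ₗ f) = ker f) : Disjoint (ker f) (range f) := by
  rw [disjoint_iff_inf_le]
  rintro _ ⟨hx, y, rfl⟩
  have hy : y ∈ ker (f ∘ₗ f) := hx
  rw [h] at hy
  exact hy

end Ring

section FiniteDimensional

variable {K V : Type*} [Field K] [AddCommGroup V] [Module K V] [FiniteDimensional K V]

lemma LinearMap.range_comp_eq_range_inf_range {W : Type*} [AddCommGroup W] [Module K W]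
    {f : V →ₗ[K] V} (g : W →ₗ[K] V) (hf : ker (f ∘ₗ f) = ker f)
    (hg : range (f ∘ₗ g) ≤ range g) :
    range (f ∘ₗ g) = range f ⊓ range g := by
  refine le_antisymm (le_inf (range_comp_le_range g f) hg) ?_
  set p := range f ⊓ range g
  have hmaps : ∀ x ∈ p, f x ∈ p := by
    rintro x ⟨-, z, rfl⟩
    exact ⟨mem_range_self f _, hg (mem_range_self (f ∘ₗ g) z)⟩
  have hinj : Function.Injective (f.restrict hmaps) :=
    (injective_restrict_iff hmaps).mpr
      ((disjoint_ker_range_of_ker_comp_self_eq hf).symm.mono_left inf_le_left)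
  intro x hx
  obtain ⟨⟨y, hy⟩, hfy⟩ := surjective_of_injective hinj ⟨x, hx⟩
  obtain ⟨z, rfl⟩ := hy.2
  exact ⟨z, congrArg Subtype.val hfy⟩

lemma LinearMap.ker_comp_self_eq_iff_finrank_range_eq (f : V →ₗ[K] V) :
    ker (f ∘ₗ f) = ker f ↔ finrank K (range (f ∘ₗ f)) = finrank K (range f) := by
  have hff := finrank_range_add_finrank_ker (f ∘ₗ f)
  have hf := finrank_range_add_finrank_ker f
  refine ⟨fun h ↦ by rw [h] at hff; omega, fun h ↦ ?_⟩
  exact (Submodule.eq_of_le_of_finrank_eq (ker_le_ker_comp f f) (by omega)).symm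

lemma LinearMap.range_comp_self_eq_iff_finrank_range_eq (f : V →ₗ[K] V) :
    range (f ∘ₗ f) = range f ↔ finrank K (range (f ∘ₗ f)) = finrank K (range f) :=
  ⟨fun h ↦ by rw [h], Submodule.eq_of_le_of_finrank_eq (range_comp_le_range f f)⟩

lemma LinearMap.rank_comp_self_eq_iff_finrank_range_eq (f : V →ₗ[K] V) :
    (f ∘ₗ f).rank = f.rank ↔ finrank K (range (f ∘ₗ f)) = finrank K (range f) := by
  rw [LinearMap.rank, LinearMap.rank, ← finrank_eq_rank, ← finrank_eq_rank, Nat.cast_inj]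

end FiniteDimensional

theorem stmt18 (n : ℕ) (A : (Fin n → ℂ) →ₗ[ℂ] (Fin n → ℂ)) :
    List.TFAE
      [LinearMap.ker (A ∘ₗ A) = LinearMap.ker A,
       ∀ B : (Fin n → ℂ) →ₗ[ℂ] (Fin n → ℂ),
         LinearMap.range (A ∘ₗ B) ≤ LinearMap.range B →
           LinearMap.range (A ∘ₗ B) = LinearMap.range A ⊓ LinearMap.range B,
       LinearMap.range (A ∘ₗ A) = LinearMap.range A,
       LinearMap.rank (A ∘ₗ A) = LinearMap.rank A] := by
  tfae_have 1 → 2 := fun h B hB ↦ range_comp_eq_range_inf_range B h hB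
  tfae_have 2 → 3 := fun h ↦ by simpa using h A (range_comp_le_range A A)
  tfae_have 3 ↔ 1 :=
    (range_comp_self_eq_iff_finrank_range_eq A).trans (ker_comp_self_eq_iff_finrank_range_eq A).symm
  tfae_have 4 ↔ 1 :=
    (rank_comp_self_eq_iff_finrank_range_eq A).trans (ker_comp_self_eq_iff_finrank_range_eq A).symm
  tfae_finish
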